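/- Fix α, β > 0 and set r = √(α/β). Let A ≥ 0 and ε > 0 with εA < 2αr/(3√3). Let V : [0, ∞) → ℝ^d be an (ε, A)-characteristic velocity with ρ₁^ε(−A) < |V(0)| < ρ₂^ε(−A). Then for every t > 0, ρ₁^ε(−A) < |V(0)| < |V(t)| ≤ ρ₃^ε(A). -/

import Mathlib

/-!
Writing `V' = (α - β‖V‖²) V / ε + W` with `‖W‖ ≤ A`, the derivative `2⟪V, V'⟫` of `‖V‖²` lies
within `2A‖V‖` of `2(α - β‖V‖²)‖V‖² / ε`, so it has the sign of `-εA + (α - β‖V‖²)‖V‖ > 0`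
when `ρ₁ < ‖V‖ < ρ₂` and of `εA + (α - β‖V‖²)‖V‖ < 0` when `‖V‖ > ρ₃`. Spheres of such radii
are one-way barriers (a fencing argument): the norm can never fall back to a level in
`(ρ₁, ρ₂)` it has exceeded, nor climb above a level beyond `ρ₃`.
-/

open Set Filter Topology
open scoped RealInnerProductSpace

section Barrier

variable {g g' : ℝ → ℝ} {a t₀ t : ℝ}

theorem HasDerivWithinAt.eventually_lt_of_pos {c x : ℝ} (hg : HasDerivWithinAt g c (Ici x) x)
    (hpos : 0 < c) : ∀ᶠ y in 𝓝[>] x, g x < g y := by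
  have hslope := (hasDerivWithinAt_iff_tendsto_slope' (lt_irrefl x)).mp hg.Ioi_of_Ici
  filter_upwards [hslope.eventually (eventually_gt_nhds hpos), self_mem_nhdsWithin]
    with y hy hxy
  exact (slope_pos_iff_of_le (le_of_lt hxy)).1 hy

theorem le_of_deriv_pos_at_level (hg : ∀ x ∈ Ici t₀, HasDerivWithinAt g (g' x) (Ici t₀) x)
    (hlevel : ∀ x ∈ Ici t₀, g x = a → 0 < g' x) (h₀ : a ≤ g t₀) (ht : t₀ ≤ t) : a ≤ g t :=
  image_le_of_deriv_right_lt_deriv_boundary' (f' := fun _ => 0) continuousOn_const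
    (fun _ _ => hasDerivWithinAt_const _ _ _) h₀
    (fun x hx => (hg x (Icc_subset_Ici_self hx)).continuousWithinAt.mono Icc_subset_Ici_self)
    (fun x hx => (hg x hx.1).mono (Ici_subset_Ici.2 hx.1))
    (fun x hx hx' => hlevel x hx.1 hx'.symm) ⟨ht, le_rfl⟩

theorem le_of_deriv_neg_at_level (hg : ∀ x ∈ Ici t₀, HasDerivWithinAt g (g' x) (Ici t₀) x)
    (hlevel : ∀ x ∈ Ici t₀, g x = a → g' x < 0) (h₀ : g t₀ ≤ a) (ht : t₀ ≤ t) : g t ≤ a :=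
  image_le_of_deriv_right_lt_deriv_boundary' (B' := fun _ => 0)
    (fun x hx => (hg x (Icc_subset_Ici_self hx)).continuousWithinAt.mono Icc_subset_Ici_self)
    (fun x hx => (hg x hx.1).mono (Ici_subset_Ici.2 hx.1)) h₀ continuousOn_const
    (fun _ _ => hasDerivWithinAt_const _ _ _) (fun x hx hx' => hlevel x hx.1 hx') ⟨ht, le_rfl⟩

end Barrier

section NormBarrier

variable {E : Type*} [NormedAddCommGroup E] [InnerProductSpace ℝ E]
  {f f' : ℝ → E} {t₀ t : ℝ}

theorem norm_le_of_inner_neg {ρ : ℝ} (hf : ∀ x ∈ Ici t₀, HasDerivWithinAt f (f' x) (Ici t₀) x)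
    (hin : ∀ x ∈ Ici t₀, ρ < ‖f x‖ → ⟪f x, f' x⟫ < 0) (h₀ : ‖f t₀‖ ≤ ρ) (ht : t₀ ≤ t) :
    ‖f t‖ ≤ ρ := by
  refine le_of_forall_gt_imp_ge_of_dense fun c hc => ?_
  have hc₀ : 0 ≤ c := (norm_nonneg _).trans (h₀.trans hc.le)
  have hlevel : ∀ x ∈ Ici t₀, ‖f x‖ ^ 2 = c ^ 2 → 2 * ⟪f x, f' x⟫ < 0 := by
    intro x hx hfx
    rw [sq_eq_sq₀ (norm_nonneg _) hc₀] at hfx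
    linarith [hin x hx (hfx ▸ hc)]
  have hsq := le_of_deriv_neg_at_level (fun x hx => (hf x hx).norm_sq) hlevel
    (pow_le_pow_left₀ (norm_nonneg _) (h₀.trans hc.le) 2) ht
  exact (sq_le_sq₀ (norm_nonneg _) hc₀).1 hsq

theorem norm_lt_norm_of_inner_pos {a b : ℝ}
    (hf : ∀ x ∈ Ici t₀, HasDerivWithinAt f (f' x) (Ici t₀) x)
    (hout : ∀ x ∈ Ici t₀, a < ‖f x‖ → ‖f x‖ < b → 0 < ⟪f x, f' x⟫)
    (ha : a < ‖f t₀‖) (hb : ‖f t₀‖ < b) (ht : t₀ < t) : ‖f t₀‖ < ‖f t‖ := by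
  have hg : ∀ x ∈ Ici t₀, HasDerivWithinAt (‖f ·‖ ^ 2) (2 * ⟪f x, f' x⟫) (Ici t₀) x :=
    fun x hx => (hf x hx).norm_sq
  -- Strictness: place the barrier at the norm reached at a time `s` shortly after `t₀`.
  obtain ⟨s, ⟨hs₀, hst⟩, hgrow, hsb⟩ : ∃ s ∈ Ioo t₀ t, ‖f t₀‖ < ‖f s‖ ∧ ‖f s‖ < b := by
    have hpos : 0 < 2 * ⟪f t₀, f' t₀⟫ := by linarith [hout t₀ self_mem_Ici ha hb]
    have hgrow := (hg t₀ self_mem_Ici).eventually_lt_of_pos hpos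
    have hsmall : ∀ᶠ y in 𝓝[>] t₀, ‖f y‖ < b :=
      (((hf t₀ self_mem_Ici).continuousWithinAt.mono Ioi_subset_Ici_self).norm.tendsto).eventually
        (eventually_lt_nhds hb)
    refine (Eventually.and (Ioo_mem_nhdsGT ht) (hgrow.and hsmall)).exists.imp
      fun y hy => ⟨hy.1, (sq_lt_sq₀ (norm_nonneg _) (norm_nonneg _)).1 hy.2.1, hy.2.2⟩
  have hlevel : ∀ x ∈ Ici s, ‖f x‖ ^ 2 = ‖f s‖ ^ 2 → 0 < 2 * ⟪f x, f' x⟫ := by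
    intro x hx hfx
    rw [sq_eq_sq₀ (norm_nonneg _) (norm_nonneg _)] at hfx
    linarith [hout x (hs₀.le.trans hx) (ha.trans (hgrow.trans_eq hfx.symm)) (hfx ▸ hsb)]
  have hsq := le_of_deriv_pos_at_level
    (fun x hx => (hg x (hs₀.le.trans hx)).mono (Ici_subset_Ici.2 hs₀.le)) hlevel le_rfl hst.le
  exact hgrow.trans_le ((sq_le_sq₀ (norm_nonneg _) (norm_nonneg _)).1 hsq)

end NormBarrier

section Cubic

variable {α β k ρ : ℝ}

theorem cubic_pos_between_roots {ρ₁ ρ₂ : ℝ} (hβ : 0 < β) (hρ₁ : 0 ≤ ρ₁)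
    (h₁ : -k + (α - β * ρ₁ ^ 2) * ρ₁ = 0) (h₂ : -k + (α - β * ρ₂ ^ 2) * ρ₂ = 0)
    (hlo : ρ₁ < ρ) (hhi : ρ < ρ₂) : 0 < -k + (α - β * ρ ^ 2) * ρ := by
  have hα : α = β * (ρ₁ ^ 2 + ρ₁ * ρ₂ + ρ₂ ^ 2) := by
    have hfac : (ρ₂ - ρ₁) * (α - β * (ρ₁ ^ 2 + ρ₁ * ρ₂ + ρ₂ ^ 2)) = 0 := by
      linear_combination h₂ - h₁
    linarith [(mul_eq_zero.1 hfac).resolve_left (sub_ne_zero.2 (hlo.trans hhi).ne')]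
  have hfactor : -k + (α - β * ρ ^ 2) * ρ = β * (ρ - ρ₁) * (ρ₂ - ρ) * (ρ + ρ₁ + ρ₂) := by
    linear_combination h₁ + (ρ - ρ₁) * hα
  rw [hfactor]
  have : 0 < ρ + ρ₁ + ρ₂ := by linarith
  have := sub_pos.2 hlo
  have := sub_pos.2 hhi
  positivity

theorem cubic_neg_above_root {ρ₃ : ℝ} (hβ : 0 < β) (hρ₃ : 0 ≤ ρ₃) (hαρ₃ : α ≤ β * ρ₃ ^ 2)
    (h₃ : k + (α - β * ρ₃ ^ 2) * ρ₃ = 0) (hρ : ρ₃ < ρ) : k + (α - β * ρ ^ 2) * ρ < 0 := by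
  have hfactor : k + (α - β * ρ ^ 2) * ρ = (ρ - ρ₃) * (α - β * (ρ ^ 2 + ρ * ρ₃ + ρ₃ ^ 2)) := by
    linear_combination h₃
  rw [hfactor]
  have hρ₀ : 0 < ρ := hρ₃.trans_lt hρ
  refine mul_neg_of_pos_of_neg (sub_pos.2 hρ) ?_
  nlinarith [mul_pos hβ (mul_pos hρ₀ hρ₀), mul_nonneg hβ.le (mul_nonneg hρ₀.le hρ₃)]

end Cubic

section CharacteristicVelocity

variable {E : Type*} [NormedAddCommGroup E] [InnerProductSpace ℝ E]
  {v w : E} {α β ε A : ℝ}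

theorem abs_inner_sub_mul_norm_sq_le {c : ℝ} (h : ‖w - c • v‖ ≤ A) :
    |⟪v, w⟫ - c * ‖v‖ ^ 2| ≤ ‖v‖ * A := by
  have hsplit : ⟪v, w⟫ - c * ‖v‖ ^ 2 = ⟪v, w - c • v⟫ := by
    rw [inner_sub_right, real_inner_smul_right, real_inner_self_eq_norm_sq]
  rw [hsplit]
  exact (abs_real_inner_le_norm _ _).trans (by gcongr)

theorem inner_pos_of_cubic_pos (hε : 0 < ε) (h : ‖w - ((1 / ε) * (α - β * ‖v‖ ^ 2)) • v‖ ≤ A)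
    (hv : 0 < ‖v‖) (hcubic : 0 < -(ε * A) + (α - β * ‖v‖ ^ 2) * ‖v‖) : 0 < ⟪v, w⟫ := by
  have hlow := (abs_le.1 (abs_inner_sub_mul_norm_sq_le h)).1
  calc 0 < ‖v‖ / ε * (-(ε * A) + (α - β * ‖v‖ ^ 2) * ‖v‖) := mul_pos (div_pos hv hε) hcubic
    _ = (1 / ε) * (α - β * ‖v‖ ^ 2) * ‖v‖ ^ 2 - ‖v‖ * A := by field_simp; ring
    _ ≤ ⟪v, w⟫ := by linarith

theorem inner_neg_of_cubic_neg (hε : 0 < ε) (h : ‖w - ((1 / ε) * (α - β * ‖v‖ ^ 2)) • v‖ ≤ A)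
    (hv : 0 < ‖v‖) (hcubic : ε * A + (α - β * ‖v‖ ^ 2) * ‖v‖ < 0) : ⟪v, w⟫ < 0 := by
  have hupp := (abs_le.1 (abs_inner_sub_mul_norm_sq_le h)).2
  calc ⟪v, w⟫ ≤ (1 / ε) * (α - β * ‖v‖ ^ 2) * ‖v‖ ^ 2 + ‖v‖ * A := by linarith
    _ = ‖v‖ / ε * (ε * A + (α - β * ‖v‖ ^ 2) * ‖v‖) := by field_simp; ring
    _ < 0 := mul_neg_of_pos_of_neg (div_pos hv hε) hcubic

end CharacteristicVelocity

theorem stmt9_general (d : ℕ) (α β ε A : ℝ) (hα : 0 < α) (hβ : 0 < β) (hε : 0 < ε)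
    (r : ℝ) (hr : r = Real.sqrt (α / β))
    (V V' : ℝ → EuclideanSpace ℝ (Fin d))
    (hVderiv : ∀ t ∈ Set.Ici (0:ℝ), HasDerivWithinAt V (V' t) (Set.Ici 0) t)
    (hchar : ∀ t ∈ Set.Ici (0:ℝ),
      ‖V' t - ((1 / ε) * (α - β * ‖V t‖ ^ 2)) • V t‖ ≤ A)
    (ρ₁ : ℝ) (hρ₁mem : 0 ≤ ρ₁ ∧ ρ₁ ≤ r / Real.sqrt 3)
    (hρ₁ : -(ε * A) + (α - β * ρ₁ ^ 2) * ρ₁ = 0)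
    (ρ₂ : ℝ) (hρ₂mem : r / Real.sqrt 3 ≤ ρ₂ ∧ ρ₂ ≤ r)
    (hρ₂ : -(ε * A) + (α - β * ρ₂ ^ 2) * ρ₂ = 0)
    (ρ₃ : ℝ) (hρ₃r : r ≤ ρ₃) (hρ₃ : ε * A + (α - β * ρ₃ ^ 2) * ρ₃ = 0)
    (hV0 : ρ₁ < ‖V 0‖ ∧ ‖V 0‖ < ρ₂) :
    ∀ t, 0 < t → ρ₁ < ‖V 0‖ ∧ ‖V 0‖ < ‖V t‖ ∧ ‖V t‖ ≤ ρ₃ := by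
  intro t ht
  have hr₀ : 0 ≤ r := hr ▸ Real.sqrt_nonneg _
  have hαρ₃ : α ≤ β * ρ₃ ^ 2 := by
    have hβr : β * r ^ 2 = α := by
      rw [hr, Real.sq_sqrt (div_pos hα hβ).le]
      field_simp
    rw [← hβr]
    gcongr
  have hgrow : ∀ x ∈ Ici (0:ℝ), ρ₁ < ‖V x‖ → ‖V x‖ < ρ₂ → 0 < ⟪V x, V' x⟫ :=
    fun x hx h₁ h₂ => inner_pos_of_cubic_pos hε (hchar x hx) (hρ₁mem.1.trans_lt h₁)
      (cubic_pos_between_roots hβ hρ₁mem.1 hρ₁ hρ₂ h₁ h₂)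
  have hshrink : ∀ x ∈ Ici (0:ℝ), ρ₃ < ‖V x‖ → ⟪V x, V' x⟫ < 0 :=
    fun x hx h₃ => inner_neg_of_cubic_neg hε (hchar x hx) ((hr₀.trans hρ₃r).trans_lt h₃)
      (cubic_neg_above_root hβ (hr₀.trans hρ₃r) hαρ₃ hρ₃ h₃)
  exact ⟨hV0.1, norm_lt_norm_of_inner_pos hVderiv hgrow hV0.1 hV0.2 ht,
    norm_le_of_inner_neg hVderiv hshrink (hV0.2.le.trans (hρ₂mem.2.trans hρ₃r)) ht.le⟩

/-- Fix `α, β > 0`, `r = √(α/β)`, `A ≥ 0`, `ε > 0` with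
`εA < 2αr/(3√3)`. Let `ρ₁ ∈ [0, r/√3]` and `ρ₂ ∈ [r/√3, r]` be the two zeros
of `ρ ↦ −εA + (α − βρ²)ρ` in `[0, r]`, and `ρ₃ ∈ [r,∞)` the zero of
`ρ ↦ εA + (α − βρ²)ρ`. If `V` is an `(ε,A)`-characteristic velocity with
`ρ₁ < |V(0)| < ρ₂`, then `ρ₁ < |V(0)| < |V(t)| ≤ ρ₃` for all `t > 0`. -/
theorem stmt9 (d : ℕ) (α β ε A : ℝ) (hα : 0 < α) (hβ : 0 < β) (hε : 0 < ε)
    (hA : 0 ≤ A) (r : ℝ) (hr : r = Real.sqrt (α / β))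
    (hεA : ε * A < 2 * α * r / (3 * Real.sqrt 3))
    (V V' : ℝ → EuclideanSpace ℝ (Fin d))
    (hV'cont : ContinuousOn V' (Set.Ici 0))
    (hVderiv : ∀ t ∈ Set.Ici (0:ℝ), HasDerivWithinAt V (V' t) (Set.Ici 0) t)
    (hchar : ∀ t ∈ Set.Ici (0:ℝ),
      ‖V' t - ((1 / ε) * (α - β * ‖V t‖ ^ 2)) • V t‖ ≤ A)
    (ρ₁ : ℝ) (hρ₁mem : 0 ≤ ρ₁ ∧ ρ₁ ≤ r / Real.sqrt 3)
    (hρ₁ : -(ε * A) + (α - β * ρ₁ ^ 2) * ρ₁ = 0)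
    (ρ₂ : ℝ) (hρ₂mem : r / Real.sqrt 3 ≤ ρ₂ ∧ ρ₂ ≤ r)
    (hρ₂ : -(ε * A) + (α - β * ρ₂ ^ 2) * ρ₂ = 0)
    (ρ₃ : ℝ) (hρ₃r : r ≤ ρ₃) (hρ₃ : ε * A + (α - β * ρ₃ ^ 2) * ρ₃ = 0)
    (hV0 : ρ₁ < ‖V 0‖ ∧ ‖V 0‖ < ρ₂) :
    ∀ t, 0 < t → ρ₁ < ‖V 0‖ ∧ ‖V 0‖ < ‖V t‖ ∧ ‖V t‖ ≤ ρ₃ :=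
  stmt9_general d α β ε A hα hβ hε r hr V V' hVderiv hchar ρ₁ hρ₁mem hρ₁ ρ₂ hρ₂mem hρ₂ ρ₃ hρ₃r hρ₃
    hV0
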